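/- Let 𝔐 = (V,⟨·,·⟩,A) be Jacobi–Tsankov and suppose x, y ∈ V are such that J(x)∘J(y) ≠ 0. Then there exists w ∈ V with ⟨J(x)J(y)w, w⟩ = ⟨J(y)J(w)x, x⟩ = ⟨J(w)J(x)y, y⟩ ≠ 0. -/

import Mathlib

/-!
Polarizing the Jacobi–Tsankov condition, `J(y)` commutes with the polarized Jacobi operator
`J(x,z)`, which by the Bianchi identity sends `x` to `-½ J(x)z` and `z` to `-½ J(z)x`. Moving
`J(x,z)` across `J(y)` and across `⟨·,·⟩` (both operators are self-adjoint) turns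
`⟨J(x)J(y)z, z⟩` into `⟨J(y)J(z)x, x⟩`; applying this twice gives the two equalities.
The operator `J(x)J(y)` is self-adjoint, so if it is nonzero its quadratic form
`w ↦ ⟨J(x)J(y)w, w⟩` is not identically zero either.
-/

noncomputable section

/-- The Jacobi operator `J(x) : y ↦ 𝒜(y,x)x` of a (tri)linear curvature operator `𝒜`. -/
def jacobiOp {V : Type*} [AddCommGroup V] [Module ℝ V]
    (Aop : V →ₗ[ℝ] V →ₗ[ℝ] V →ₗ[ℝ] V) (x : V) : V →ₗ[ℝ] V where
  toFun y := Aop y x x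
  map_add' y z := by simp
  map_smul' c y := by simp

/-- The polarized Jacobi operator `J(x,y) : z ↦ ½(𝒜(z,x)y + 𝒜(z,y)x)`. -/
def jacobiPol {V : Type*} [AddCommGroup V] [Module ℝ V]
    (Aop : V →ₗ[ℝ] V →ₗ[ℝ] V →ₗ[ℝ] V) (x y : V) : V →ₗ[ℝ] V where
  toFun z := (1/2 : ℝ) • (Aop z x y + Aop z y x)
  map_add' a b := by simp [smul_add]; abel
  map_smul' c a := by simp [smul_add, smul_comm c]

theorem LinearMap.BilinForm.exists_compLeft_self_ne_zero {V : Type*} [AddCommGroup V]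
    [Module ℝ V] {B : LinearMap.BilinForm ℝ V}
    (hBnd : ∀ x : V, (∀ y : V, B x y = 0) → x = 0) {T : V →ₗ[ℝ] V}
    (hT : (B.compLeft T).IsSymm) (hT0 : T ≠ 0) : ∃ w : V, B (T w) w ≠ 0 := by
  refine LinearMap.BilinForm.exists_bilinForm_self_ne_zero (fun h ↦ hT0 ?_)
    (LinearMap.BilinForm.isSymm_iff.mp hT)
  ext u
  exact hBnd _ fun v ↦ by simpa using LinearMap.congr_fun₂ h u v

namespace JacobiTsankov

variable {V : Type*} [AddCommGroup V] [Module ℝ V] {Aop : V →ₗ[ℝ] V →ₗ[ℝ] V →ₗ[ℝ] V}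

@[simp]
theorem jacobiOp_apply (x y : V) : jacobiOp Aop x y = Aop y x x := rfl

theorem jacobiPol_eq (x y : V) :
    jacobiPol Aop x y = (1 / 2 : ℝ) • (jacobiOp Aop (x + y) - jacobiOp Aop x - jacobiOp Aop y) := by
  ext z
  simp only [jacobiPol, LinearMap.coe_mk, AddHom.coe_mk, LinearMap.smul_apply,
    LinearMap.sub_apply, jacobiOp_apply, map_add, LinearMap.add_apply]
  module

theorem jacobiPol_comm (x y : V) : jacobiPol Aop x y = jacobiPol Aop y x := by
  ext z
  simp [jacobiPol, add_comm]

theorem commute_jacobiOp_jacobiPol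
    (hJT : ∀ x y : V, jacobiOp Aop x ∘ₗ jacobiOp Aop y = jacobiOp Aop y ∘ₗ jacobiOp Aop x)
    (z x y : V) : Commute (jacobiOp Aop z) (jacobiPol Aop x y) := by
  have hJ (a : V) : Commute (jacobiOp Aop z) (jacobiOp Aop a) := hJT z a
  rw [jacobiPol_eq]
  exact (((hJ (x + y)).sub_right (hJ x)).sub_right (hJ y)).smul_right _

variable {B : LinearMap.BilinForm ℝ V}

theorem curv_self_eq_zero (hBnd : ∀ x : V, (∀ y : V, B x y = 0) → x = 0)
    (hA1 : ∀ x y z w : V, B (Aop x y z) w = - B (Aop y x z) w) (x z : V) : Aop x x z = 0 :=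
  hBnd _ fun w ↦ by linarith [hA1 x x z w]

theorem curv_bianchi (hBnd : ∀ x : V, (∀ y : V, B x y = 0) → x = 0)
    (hA3 : ∀ x y z w : V, B (Aop x y z) w + B (Aop y z x) w + B (Aop z x y) w = 0)
    (x y z : V) : Aop x y z + Aop y z x + Aop z x y = 0 :=
  hBnd _ fun w ↦ by simpa using hA3 x y z w

theorem jacobiPol_apply_left (hBnd : ∀ x : V, (∀ y : V, B x y = 0) → x = 0)
    (hA1 : ∀ x y z w : V, B (Aop x y z) w = - B (Aop y x z) w)
    (hA3 : ∀ x y z w : V, B (Aop x y z) w + B (Aop y z x) w + B (Aop z x y) w = 0)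
    (x y : V) : jacobiPol Aop x y x = -(1 / 2 : ℝ) • jacobiOp Aop x y := by
  have hxy := curv_bianchi hBnd hA3 x y x
  rw [curv_self_eq_zero hBnd hA1, add_zero] at hxy
  simp [jacobiPol, curv_self_eq_zero hBnd hA1, eq_neg_of_add_eq_zero_left hxy]

theorem isSymm_compLeft_jacobiOp (hA1 : ∀ x y z w : V, B (Aop x y z) w = - B (Aop y x z) w)
    (hA2 : ∀ x y z w : V, B (Aop x y z) w = B (Aop z w x) y) (x : V) :
    (B.compLeft (jacobiOp Aop x)).IsSymm := by
  refine ⟨fun u v ↦ ?_⟩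
  simp only [LinearMap.BilinForm.compLeft_apply, jacobiOp_apply]
  rw [hA2, hA1, hA2, hA1, hA2]
  ring

theorem isSymm_compLeft_jacobiPol (hA1 : ∀ x y z w : V, B (Aop x y z) w = - B (Aop y x z) w)
    (hA2 : ∀ x y z w : V, B (Aop x y z) w = B (Aop z w x) y) (x y : V) :
    (B.compLeft (jacobiPol Aop x y)).IsSymm := by
  refine ⟨fun u v ↦ ?_⟩
  have hJ := fun a ↦ (isSymm_compLeft_jacobiOp hA1 hA2 a).eq u v
  simp only [LinearMap.BilinForm.compLeft_apply] at hJ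
  simp only [LinearMap.BilinForm.compLeft_apply, jacobiPol_eq, LinearMap.smul_apply,
    LinearMap.sub_apply, map_smul, map_sub, hJ (x + y), hJ x, hJ y]

theorem isSymm_compLeft_jacobiOp_comp (hBsymm : ∀ x y : V, B x y = B y x)
    (hA1 : ∀ x y z w : V, B (Aop x y z) w = - B (Aop y x z) w)
    (hA2 : ∀ x y z w : V, B (Aop x y z) w = B (Aop z w x) y)
    (hJT : ∀ x y : V, jacobiOp Aop x ∘ₗ jacobiOp Aop y = jacobiOp Aop y ∘ₗ jacobiOp Aop x)
    (x y : V) : (B.compLeft (jacobiOp Aop x ∘ₗ jacobiOp Aop y)).IsSymm := by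
  have hJ := fun a ↦ (isSymm_compLeft_jacobiOp hA1 hA2 a).eq
  simp only [LinearMap.BilinForm.compLeft_apply] at hJ
  refine ⟨fun u v ↦ ?_⟩
  simp only [LinearMap.BilinForm.compLeft_apply, LinearMap.comp_apply]
  calc B (jacobiOp Aop x (jacobiOp Aop y u)) v
      = B (jacobiOp Aop y u) (jacobiOp Aop x v) := by rw [hJ, hBsymm]
    _ = B (jacobiOp Aop y (jacobiOp Aop x v)) u := hJ y u _
    _ = B (jacobiOp Aop x (jacobiOp Aop y v)) u :=
        congrArg (B · u) (LinearMap.congr_fun (hJT y x) v)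

theorem inner_jacobiOp_jacobiOp_cycle (hBsymm : ∀ x y : V, B x y = B y x)
    (hBnd : ∀ x : V, (∀ y : V, B x y = 0) → x = 0)
    (hA1 : ∀ x y z w : V, B (Aop x y z) w = - B (Aop y x z) w)
    (hA2 : ∀ x y z w : V, B (Aop x y z) w = B (Aop z w x) y)
    (hA3 : ∀ x y z w : V, B (Aop x y z) w + B (Aop y z x) w + B (Aop z x y) w = 0)
    (hJT : ∀ x y : V, jacobiOp Aop x ∘ₗ jacobiOp Aop y = jacobiOp Aop y ∘ₗ jacobiOp Aop x)
    (x y z : V) :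
    B (jacobiOp Aop x (jacobiOp Aop y z)) z = B (jacobiOp Aop y (jacobiOp Aop z x)) x := by
  set P := jacobiPol Aop x z with hP
  have hPx : P x = -(1 / 2 : ℝ) • jacobiOp Aop x z := jacobiPol_apply_left hBnd hA1 hA3 x z
  have hPz : P z = -(1 / 2 : ℝ) • jacobiOp Aop z x := by
    rw [hP, jacobiPol_comm]
    exact jacobiPol_apply_left hBnd hA1 hA3 z x
  have hPy : jacobiOp Aop y (P x) = P (jacobiOp Aop y x) :=
    LinearMap.congr_fun (commute_jacobiOp_jacobiPol hJT y x z) x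
  calc B (jacobiOp Aop x (jacobiOp Aop y z)) z
      = B (jacobiOp Aop y (jacobiOp Aop x z)) z :=
        congrArg (B · z) (LinearMap.congr_fun (hJT x y) z)
    _ = -2 * B (jacobiOp Aop y (P x)) z := by simp [hPx]
    _ = -2 * B (P z) (jacobiOp Aop y x) := by
        rw [hPy]
        exact congrArg (-2 * ·) ((isSymm_compLeft_jacobiPol hA1 hA2 x z).eq _ _)
    _ = B (jacobiOp Aop y x) (jacobiOp Aop z x) := by simp [hPz, hBsymm]
    _ = B (jacobiOp Aop y (jacobiOp Aop z x)) x :=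
        (isSymm_compLeft_jacobiOp hA1 hA2 y).eq x _

end JacobiTsankov

theorem jacobiTsankov_exists_w
    {V : Type*} [AddCommGroup V] [Module ℝ V]
    -- a nondegenerate symmetric bilinear form ⟨·,·⟩ on V
    (B : LinearMap.BilinForm ℝ V)
    (hBsymm : ∀ x y : V, B x y = B y x)
    (hBnd : ∀ x : V, (∀ y : V, B x y = 0) → x = 0)
    -- the curvature operator 𝒜, with `A x y z w = ⟨𝒜(x,y)z, w⟩`
    (Aop : V →ₗ[ℝ] V →ₗ[ℝ] V →ₗ[ℝ] V)
    -- A(x,y,z,w) = -A(y,x,z,w)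
    (hA1 : ∀ x y z w : V, B (Aop x y z) w = - B (Aop y x z) w)
    -- A(x,y,z,w) = A(z,w,x,y)
    (hA2 : ∀ x y z w : V, B (Aop x y z) w = B (Aop z w x) y)
    -- first Bianchi identity
    (hA3 : ∀ x y z w : V, B (Aop x y z) w + B (Aop y z x) w + B (Aop z x y) w = 0)
    -- 𝔐 is Jacobi–Tsankov
    (hJT : ∀ x y : V, jacobiOp Aop x ∘ₗ jacobiOp Aop y = jacobiOp Aop y ∘ₗ jacobiOp Aop x)
    (x y : V) (hxy : jacobiOp Aop x ∘ₗ jacobiOp Aop y ≠ 0) :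
    ∃ w : V,
      B (jacobiOp Aop x (jacobiOp Aop y w)) w = B (jacobiOp Aop y (jacobiOp Aop w x)) x ∧
      B (jacobiOp Aop y (jacobiOp Aop w x)) x = B (jacobiOp Aop w (jacobiOp Aop x y)) y ∧
      B (jacobiOp Aop x (jacobiOp Aop y w)) w ≠ 0 := by
  have cycle := JacobiTsankov.inner_jacobiOp_jacobiOp_cycle hBsymm hBnd hA1 hA2 hA3 hJT
  obtain ⟨w, hw⟩ := LinearMap.BilinForm.exists_compLeft_self_ne_zero hBnd
    (JacobiTsankov.isSymm_compLeft_jacobiOp_comp hBsymm hA1 hA2 hJT x y) hxy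
  exact ⟨w, cycle x y w, cycle y w x, hw⟩
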